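/- Let (B, Ω) be a model, let G(B) be the DAG with an edge j → i whenever B_{ij} ≠ 0, and let 𝒟 be a DAG on [p] that has the same skeleton and the same v-structures as G(B) (i.e., 𝒟 is Markov equivalent to G(B)). Then there exist a matrix B' compatible with 𝒟 and a diagonal matrix Ω' with positive diagonal entries such that (I−B)⁻¹ Ω (I−B)⁻ᵀ = (I−B')⁻¹ Ω' (I−B')⁻ᵀ. -/

import Mathlib

/-!
Two Markov equivalent DAGs are connected by a sequence of covered edge reversals (Chickering):
while `G` and `𝒟` disagree, take the head `y` of a disagreeing edge `G`-minimal and then its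
tail `x` `G`-maximal; then `x → y` is covered, i.e. `pa(y) = pa(x) ∪ {x}`, and reversing it keeps
skeleton, v-structures and acyclicity while reducing the number of disagreeing edges.
A covered reversal is realised on models: as `pa(y) = pa(x) ∪ {x}`, the structural equations of
`x` and `y` can be recombined by a unimodular `2 × 2` change of variables, chosen so that the new
noises of `x` and `y` stay uncorrelated, without changing the covariance.
-/

open Matrix

/-- A matrix is a DAG (connectivity) matrix if it is strictly lower triangular up to a
simultaneous permutation of rows and columns (in particular it has zero diagonal). -/
def IsDagMatrix {p : ℕ} (B : Matrix (Fin p) (Fin p) ℝ) : Prop :=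
  ∃ σ : Equiv.Perm (Fin p), ∀ i j : Fin p, σ i ≤ σ j → B i j = 0

/-- A noise-variance matrix: diagonal with positive diagonal entries. -/
def DiagPos {p : ℕ} (Ω : Matrix (Fin p) (Fin p) ℝ) : Prop :=
  Ω.IsDiag ∧ ∀ i, 0 < Ω i i

/-- The covariance matrix `(I − B)⁻¹ Ω (I − B)⁻ᵀ` entailed by the model `(B, Ω)`. -/
noncomputable def CovOf {p : ℕ} (B Ω : Matrix (Fin p) (Fin p) ℝ) : Matrix (Fin p) (Fin p) ℝ :=
  (1 - B)⁻¹ * Ω * ((1 - B)⁻¹)ᵀ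

/-- A directed graph on `[p]` (given as its edge relation, `D a b` meaning `a → b`)
is acyclic if it has no directed cycles. -/
def IsAcyclic {p : ℕ} (D : Fin p → Fin p → Prop) : Prop :=
  ∀ i, ¬ Relation.TransGen D i i

/-- The graph `G(B)` underlying a connectivity matrix `B`: an edge `j → i` whenever
`B i j ≠ 0`. -/
def graphOf {p : ℕ} (B : Matrix (Fin p) (Fin p) ℝ) : Fin p → Fin p → Prop :=
  fun j i => B i j ≠ 0

/-- A matrix `B` is compatible with a graph `D` (written `B ∼ D`) if `B i j ≠ 0`
implies that `j → i` is an edge of `D`. -/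
def Compatible {p : ℕ} (B : Matrix (Fin p) (Fin p) ℝ) (D : Fin p → Fin p → Prop) : Prop :=
  ∀ i j, B i j ≠ 0 → D j i

/-- Two directed graphs have the same skeleton: the same adjacencies ignoring direction. -/
def SameSkeleton {V : Type*} (D D' : V → V → Prop) : Prop :=
  ∀ a b, (D a b ∨ D b a) ↔ (D' a b ∨ D' b a)

/-- `(i, k, j)` is a v-structure: edges `i → k` and `j → k` with `i ≠ j` and `i, j`
non-adjacent. -/
def IsVStruct {V : Type*} (D : V → V → Prop) (i k j : V) : Prop :=
  D i k ∧ D j k ∧ i ≠ j ∧ ¬ D i j ∧ ¬ D j i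

/-- Two directed graphs have the same v-structures. -/
def SameVStructs {V : Type*} (D D' : V → V → Prop) : Prop :=
  ∀ i k j, IsVStruct D i k j ↔ IsVStruct D' i k j

/-- `𝓘`-equivalence of two DAGs: same skeleton, same v-structures, and the same parents
for every node in `𝓘`. -/
def IEquiv {p : ℕ} (I : Set (Fin p)) (D D' : Fin p → Fin p → Prop) : Prop :=
  SameSkeleton D D' ∧ SameVStructs D D' ∧ ∀ i ∈ I, ∀ j, D j i ↔ D' j i

open Relation

theorem Relation.TransGen.or_of_adjoin_edge {α : Type*} {r : α → α → Prop} {a b u v : α}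
    (h : TransGen (fun u v => r u v ∨ (u = a ∧ v = b)) u v) :
    TransGen r u v ∨ (ReflTransGen r u a ∧ ReflTransGen r b v) := by
  induction h with
  | single h =>
    rcases h with h | ⟨rfl, rfl⟩
    · exact Or.inl (.single h)
    · exact Or.inr ⟨.refl, .refl⟩
  | tail _ h ih =>
    rcases h with h | ⟨rfl, rfl⟩
    · exact ih.imp (·.tail h) fun ⟨h₁, h₂⟩ => ⟨h₁, h₂.tail h⟩
    · exact Or.inr ⟨ih.elim (·.to_reflTransGen) (·.1), .refl⟩

section Graph
variable {V : Type*} {G D : V → V → Prop} {x y : V}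

theorem SameSkeleton.symm (h : SameSkeleton G D) : SameSkeleton D G :=
  fun a b => (h a b).symm

theorem SameSkeleton.trans {H : V → V → Prop} (h₁ : SameSkeleton G H) (h₂ : SameSkeleton H D) :
    SameSkeleton G D :=
  fun a b => (h₁ a b).trans (h₂ a b)

theorem SameVStructs.symm (h : SameVStructs G D) : SameVStructs D G :=
  fun i k j => (h i k j).symm

theorem SameVStructs.trans {H : V → V → Prop} (h₁ : SameVStructs G H) (h₂ : SameVStructs H D) :
    SameVStructs G D :=
  fun i k j => (h₁ i k j).trans (h₂ i k j)

def reverseEdge (G : V → V → Prop) (x y : V) : V → V → Prop :=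
  fun u v => (G u v ∧ ¬(u = x ∧ v = y)) ∨ (u = y ∧ v = x)

def IsCovered (G : V → V → Prop) (x y : V) : Prop :=
  ∀ z, G z y ↔ z = x ∨ G z x

theorem IsCovered.adj (h : IsCovered G x y) : G x y :=
  (h x).2 (Or.inl rfl)

theorem sameSkeleton_reverseEdge (h : G x y) : SameSkeleton G (reverseEdge G x y) := by
  intro a b
  unfold reverseEdge
  constructor
  · rintro (hab | hba)
    · by_cases e : a = x ∧ b = y
      · exact Or.inr (Or.inr ⟨e.2, e.1⟩)
      · exact Or.inl (Or.inl ⟨hab, e⟩)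
    · by_cases e : b = x ∧ a = y
      · exact Or.inl (Or.inr ⟨e.2, e.1⟩)
      · exact Or.inr (Or.inl ⟨hba, e⟩)
  · rintro ((⟨hab, -⟩ | ⟨rfl, rfl⟩) | (⟨hba, -⟩ | ⟨rfl, rfl⟩))
    · exact Or.inl hab
    · exact Or.inr h
    · exact Or.inr hba
    · exact Or.inl h

theorem sameVStructs_reverseEdge (h : IsCovered G x y) :
    SameVStructs G (reverseEdge G x y) := by
  have hskel := sameSkeleton_reverseEdge h.adj
  intro i k j
  have hnadj : (¬G i j ∧ ¬G j i) ↔ (¬reverseEdge G x y i j ∧ ¬reverseEdge G x y j i) := by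
    simpa only [not_or] using (hskel i j).not
  constructor
  · rintro ⟨hik, hjk, hij, hn⟩
    have keep : ∀ u w, G u k → G w k → u ≠ w → ¬G w u → reverseEdge G x y u k := by
      intro u w huk hwk huw hwu
      refine Or.inl ⟨huk, ?_⟩
      rintro ⟨rfl, rfl⟩
      exact hwu (((h w).1 hwk).resolve_left huw.symm)
    exact ⟨keep i j hik hjk hij hn.2, keep j i hjk hik hij.symm hn.1, hij, hnadj.1 hn⟩
  · rintro ⟨hik, hjk, hij, hn⟩
    have back : ∀ u w, reverseEdge G x y u k → reverseEdge G x y w k → u ≠ w → ¬G w u →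
        G u k := by
      rintro u w (⟨huk, -⟩ | ⟨rfl, rfl⟩) hwk huw hwu
      · exact huk
      · rcases hwk with ⟨hwx, -⟩ | ⟨rfl, -⟩
        · exact absurd ((h w).2 (Or.inr hwx)) hwu
        · exact absurd rfl huw
    have hn' := hnadj.2 hn
    exact ⟨back i j hik hjk hij hn'.2, back j i hjk hik hij.symm hn'.1, hij, hn'⟩

def reversedEdges (G D : V → V → Prop) : Set (V × V) :=
  {e | G e.1 e.2 ∧ D e.2 e.1}

theorem reversedEdges_reverseEdge (hD : ¬D x y) :
    reversedEdges (reverseEdge G x y) D = reversedEdges G D \ {(x, y)} := by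
  ext ⟨u, v⟩
  simp only [reversedEdges, reverseEdge, Set.mem_ofPred_eq, Set.mem_sdiff, Set.mem_singleton_iff,
    Prod.mk.injEq]
  constructor
  · rintro ⟨⟨huv, hne⟩ | ⟨rfl, rfl⟩, hvu⟩
    · exact ⟨⟨huv, hvu⟩, hne⟩
    · exact absurd hvu hD
  · rintro ⟨⟨huv, hvu⟩, hne⟩
    exact ⟨Or.inl ⟨huv, hne⟩, hvu⟩

theorem SameSkeleton.le_of_reversedEdges_eq_empty (hskel : SameSkeleton G D)
    (h : reversedEdges G D = ∅) {u v : V} (huv : G u v) : D u v :=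
  ((hskel u v).1 (Or.inl huv)).resolve_right fun hvu =>
    (Set.eq_empty_iff_forall_notMem.1 h (u, v)) ⟨huv, hvu⟩

end Graph

section Acyclic
variable {p : ℕ} {G D : Fin p → Fin p → Prop} {x y : Fin p}

theorem IsAcyclic.irrefl (hG : IsAcyclic G) (i : Fin p) : ¬G i i :=
  fun h => hG i (.single h)

theorem IsAcyclic.asymm (hG : IsAcyclic G) {i j : Fin p} (h : G i j) : ¬G j i :=
  fun h' => hG i (.tail (.single h) h')

theorem IsAcyclic.ne (hG : IsAcyclic G) {i j : Fin p} (h : G i j) : i ≠ j := by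
  rintro rfl
  exact hG.irrefl i h

theorem IsAcyclic.swap (hG : IsAcyclic G) : IsAcyclic (Function.swap G) :=
  fun i h => hG i (transGen_swap.1 h)

theorem isAcyclic_of_adj_lt {α : Type*} [Preorder α] (f : Fin p → α)
    (hf : ∀ u v, G u v → f u < f v) : IsAcyclic G := by
  intro i h
  have := TransGen.lift f hf _ _ h
  rw [transGen_eq_self] at this
  exact lt_irrefl _ this

theorem IsAcyclic.exists_minimal (hG : IsAcyclic G) {s : Set (Fin p)} (hs : s.Nonempty) :
    ∃ a ∈ s, ∀ b ∈ s, ¬TransGen G b a := by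
  have : IsTrans (Fin p) (TransGen G) := ⟨fun _ _ _ => TransGen.trans⟩
  have : Std.Irrefl (TransGen G) := ⟨hG⟩
  exact (Finite.wellFounded_of_trans_of_irrefl (TransGen G)).has_min s hs

theorem IsAcyclic.exists_maximal (hG : IsAcyclic G) {s : Set (Fin p)} (hs : s.Nonempty) :
    ∃ a ∈ s, ∀ b ∈ s, ¬TransGen G a b := by
  simpa only [transGen_swap] using hG.swap.exists_minimal hs

theorem IsAcyclic.reverseEdge (hG : IsAcyclic G) (h : IsCovered G x y) :
    IsAcyclic (reverseEdge G x y) := by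
  intro i hi
  rcases hi.or_of_adjoin_edge with hi | ⟨hiy, hxi⟩
  · exact hG i (TransGen.mono (fun _ _ => And.left) _ _ hi)
  -- A cycle through the reversed edge `y → x` leaves a path from `x` to `y` avoiding `x → y`;
  -- its last edge `z → y` has `z ≠ x`, so `z → x` by coveredness, closing a cycle in `G`.
  rcases (hxi.trans hiy).cases_tail with hxy | ⟨z, hxz, hzy, hzxy⟩
  · exact hG.ne h.adj hxy.symm
  · have hzx : G z x := ((h z).1 hzy).resolve_left fun hz => hzxy ⟨hz, rfl⟩
    exact hG x (.tail' (ReflTransGen.mono (fun _ _ => And.left) _ _ hxz) hzx)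

theorem exists_isCovered_mem_reversedEdges (hG : IsAcyclic G) (hD : IsAcyclic D)
    (hskel : SameSkeleton G D) (hvstr : SameVStructs G D) (hne : (reversedEdges G D).Nonempty) :
    ∃ x y, (x, y) ∈ reversedEdges G D ∧ IsCovered G x y := by
  obtain ⟨⟨x₀, y₀⟩, h₀⟩ := hne
  obtain ⟨y, ⟨x₁, hx₁⟩, hymin⟩ :=
    hG.exists_minimal (s := {y | ∃ x, (x, y) ∈ reversedEdges G D}) ⟨y₀, x₀, h₀⟩
  obtain ⟨x, hx, hxmax⟩ :=
    hG.exists_maximal (s := {x | (x, y) ∈ reversedEdges G D}) ⟨x₁, hx₁⟩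
  obtain ⟨hGxy, hDyx⟩ : G x y ∧ D y x := hx
  have hD_of_G : ∀ u v, G u v → TransGen G v y → D u v := fun u v huv hvy =>
    ((hskel u v).1 (Or.inl huv)).resolve_right fun hvu => hymin v ⟨u, huv, hvu⟩ hvy
  refine ⟨x, y, ⟨hGxy, hDyx⟩, fun z => ⟨fun hzy => or_iff_not_imp_left.2 fun hzx => ?_, ?_⟩⟩
  · by_cases hadj : G z x ∨ G x z
    · refine hadj.resolve_right fun hxz => hD x ?_
      have hDzy : D z y := ((hskel z y).1 (Or.inl hzy)).resolve_right fun hyz =>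
        hxmax z ⟨hzy, hyz⟩ (.single hxz)
      exact .tail (.tail (.single (hD_of_G x z hxz (.single hzy))) hDzy) hDyx
    · have hv : IsVStruct G x y z := ⟨hGxy, hzy, Ne.symm hzx, fun h => hadj (Or.inr h),
        fun h => hadj (Or.inl h)⟩
      exact absurd ((hvstr x y z).1 hv).1 (hD.asymm hDyx)
  · rintro (rfl | hzx)
    · exact hGxy
    have hDzx := hD_of_G z x hzx (.single hGxy)
    by_cases hadj : G z y ∨ G y z
    · exact hadj.resolve_right fun hyz => hG x (.tail (.tail (.single hGxy) hyz) hzx)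
    · have hnadj := not_or.1 ((hskel z y).not.1 hadj)
      have hv : IsVStruct D z x y :=
        ⟨hDzx, hDyx, fun h => hG.asymm hGxy (h ▸ hzx), hnadj.1, hnadj.2⟩
      exact absurd ((hvstr z x y).2 hv).2.1 (hG.asymm hGxy)

end Acyclic

section Reversal
variable {n : Type*} [DecidableEq n] {R : Type*} [CommRing R]

theorem Matrix.transpose_transvection (i j : n) (c : R) :
    (transvection i j c)ᵀ = transvection j i c := by
  simp [transvection, transpose_single]

variable [Fintype n]

theorem Matrix.inv_mul_mul_transpose_mul_inv_transpose {M A Ω : Matrix n n R}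
    (hM : IsUnit M.det) :
    (M * A)⁻¹ * (M * Ω * Mᵀ) * ((M * A)⁻¹)ᵀ = A⁻¹ * Ω * (A⁻¹)ᵀ := by
  have hMt : IsUnit Mᵀ.det := by rwa [det_transpose]
  rw [Matrix.mul_inv_rev, transpose_mul, transpose_nonsing_inv M]
  simp only [Matrix.mul_assoc, Matrix.nonsing_inv_mul_cancel_left _ _ hM,
    Matrix.mul_nonsing_inv_cancel_left _ _ hMt]

def reversalMatrix (x y : n) (β δ : R) : Matrix n n R :=
  transvection x y (-δ) * transvection y x β

variable {x y : n} (β δ : R) (C : Matrix n n R)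

theorem reversalMatrix_mul_apply (hxy : x ≠ y) (i j : n) :
    (reversalMatrix x y β δ * C) i j =
      if i = x then (1 - δ * β) * C x j - δ * C y j
      else if i = y then β * C x j + C y j else C i j := by
  rw [reversalMatrix, Matrix.mul_assoc]
  split_ifs with hix hiy
  · rw [hix, transvection_mul_apply_same, transvection_mul_apply_of_ne _ _ _ _ hxy,
      transvection_mul_apply_same]
    ring
  · rw [hiy, transvection_mul_apply_of_ne _ _ _ _ hxy.symm, transvection_mul_apply_same, add_comm]
  · rw [transvection_mul_apply_of_ne _ _ _ _ hix, transvection_mul_apply_of_ne _ _ _ _ hiy]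

theorem det_reversalMatrix (hxy : x ≠ y) : (reversalMatrix x y β δ).det = 1 := by
  simp [reversalMatrix, hxy, hxy.symm]

theorem reversalMatrix_mul_diagonal_mul_transpose (hxy : x ≠ y) (ω : n → R)
    (hδ : δ * (β ^ 2 * ω x + ω y) = β * ω x) :
    reversalMatrix x y β δ * diagonal ω * (reversalMatrix x y β δ)ᵀ =
      diagonal (Function.update (Function.update ω y (β ^ 2 * ω x + ω y)) x
        ((1 - δ * β) ^ 2 * ω x + δ ^ 2 * ω y)) := by
  rw [Matrix.mul_assoc, ← (isDiag_diagonal ω).isSymm, ← transpose_mul]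
  ext a b
  simp only [transpose_apply, reversalMatrix_mul_apply _ _ _ hxy, diagonal_apply,
    Function.update_apply]
  grind

end Reversal

section Model
variable {p : ℕ} {G : Fin p → Fin p → Prop} {B Ω : Matrix (Fin p) (Fin p) ℝ}

theorem covOf_one_sub_mul_one_sub {M : Matrix (Fin p) (Fin p) ℝ} (hM : IsUnit M.det) :
    CovOf (1 - M * (1 - B)) (M * Ω * Mᵀ) = CovOf B Ω := by
  rw [CovOf, CovOf, sub_sub_cancel, inv_mul_mul_transpose_mul_inv_transpose hM]

theorem Compatible.one_sub_reversalMatrix_mul {x y : Fin p} (hB : Compatible B G)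
    (h : IsCovered G x y) (hxy : x ≠ y) (hBx : B x x = 0) (δ : ℝ) :
    Compatible (1 - reversalMatrix x y (B y x) δ * (1 - B)) (reverseEdge G x y) := by
  have hpar : ∀ j, j ≠ x → (B x j ≠ 0 ∨ B y j ≠ 0) → G j x ∧ G j y := by
    rintro j hjx (hj | hj)
    · exact ⟨hB x j hj, (h j).2 (Or.inr (hB x j hj))⟩
    · exact ⟨((h j).1 (hB y j hj)).resolve_left hjx, hB y j hj⟩
  intro i j hij
  rw [Matrix.sub_apply, reversalMatrix_mul_apply _ _ _ hxy] at hij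
  by_cases hix : i = x
  · subst hix
    by_cases hjy : j = y
    · exact Or.inr ⟨hjy, rfl⟩
    by_cases hjx : j = i
    · subst hjx
      simp [hBx, hxy.symm] at hij
    refine Or.inl ⟨(hpar j hjx ?_).1, fun h => hxy h.2⟩
    by_contra! h0
    simp [h0, Ne.symm hjx, Ne.symm hjy] at hij
  by_cases hiy : i = y
  · subst hiy
    by_cases hjx : j = x
    · subst hjx
      simp [hBx, hxy.symm] at hij
    refine Or.inl ⟨(hpar j hjx ?_).2, fun h => hjx h.1⟩
    by_contra! h0
    simp [h0, Ne.symm hjx, Ne.symm hxy] at hij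
  · simp only [hix, hiy, if_false, Matrix.sub_apply, sub_sub_cancel] at hij
    exact Or.inl ⟨hB i j hij, fun h => hiy h.2⟩

theorem exists_model_reverseEdge {x y : Fin p} (hG : IsAcyclic G) (hB : Compatible B G)
    (hΩ : DiagPos Ω) (h : IsCovered G x y) :
    ∃ B' Ω', Compatible B' (reverseEdge G x y) ∧ DiagPos Ω' ∧ CovOf B' Ω' = CovOf B Ω := by
  have hxy := hG.ne h.adj
  have hBx : B x x = 0 := by_contra fun hx => hG.irrefl x (hB x x hx)
  set ω := Ω.diag
  set β := B y x
  set v := β ^ 2 * ω x + ω y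
  have hv : 0 < v := by have := hΩ.2 x; have := hΩ.2 y; positivity
  -- This choice of `δ` makes the new noise of `x` and `y` uncorrelated.
  set δ := β * ω x / v
  have hδ : δ * v = β * ω x := div_mul_cancel₀ _ hv.ne'
  set M := reversalMatrix x y β δ
  refine ⟨1 - M * (1 - B), M * Ω * Mᵀ, hB.one_sub_reversalMatrix_mul h hxy hBx δ, ?_,
    covOf_one_sub_mul_one_sub (by rw [det_reversalMatrix _ _ hxy]; exact isUnit_one)⟩
  rw [← hΩ.1.diagonal_diag, reversalMatrix_mul_diagonal_mul_transpose _ _ hxy _ hδ]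
  refine ⟨isDiag_diagonal _, fun i => ?_⟩
  rw [diagonal_apply_eq]
  rcases eq_or_ne i x with rfl | hix
  · rw [Function.update_self]
    have hωx : 0 < ω i := hΩ.2 i
    have hωy : 0 < ω y := hΩ.2 y
    rcases eq_or_ne δ 0 with hδ0 | hδ0
    · simpa [hδ0] using hωx
    · positivity
  rw [Function.update_of_ne hix]
  rcases eq_or_ne i y with rfl | hiy
  · rwa [Function.update_self]
  · rw [Function.update_of_ne hiy]
    exact hΩ.2 i

end Model

theorem exists_model_of_sameSkeleton_of_sameVStructs {p : ℕ} {G D : Fin p → Fin p → Prop}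
    {B Ω : Matrix (Fin p) (Fin p) ℝ} (hG : IsAcyclic G) (hD : IsAcyclic D)
    (hskel : SameSkeleton G D) (hvstr : SameVStructs G D) (hB : Compatible B G)
    (hΩ : DiagPos Ω) :
    ∃ B' Ω', Compatible B' D ∧ DiagPos Ω' ∧ CovOf B Ω = CovOf B' Ω' := by
  induction hn : (reversedEdges G D).ncard using Nat.strong_induction_on generalizing G B Ω with
  | _ n ih =>
  rcases (reversedEdges G D).eq_empty_or_nonempty with hΔ | hΔ
  · exact ⟨B, Ω, fun i j hij => hskel.le_of_reversedEdges_eq_empty hΔ (hB i j hij), hΩ, rfl⟩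
  obtain ⟨x, y, hrev, hcov⟩ := exists_isCovered_mem_reversedEdges hG hD hskel hvstr hΔ
  obtain ⟨B', Ω', hB', hΩ', heq'⟩ := exists_model_reverseEdge hG hB hΩ hcov
  have hlt : (reversedEdges (reverseEdge G x y) D).ncard < n := by
    rw [reversedEdges_reverseEdge (hD.asymm hrev.2), ← hn]
    exact Set.ncard_sdiff_singleton_lt_of_mem hrev (Set.toFinite _)
  obtain ⟨B'', Ω'', hB'', hΩ'', heq''⟩ := ih _ hlt (hG.reverseEdge hcov)
    ((sameSkeleton_reverseEdge hcov.adj).symm.trans hskel)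
    ((sameVStructs_reverseEdge hcov).symm.trans hvstr) hB' hΩ' rfl
  exact ⟨B'', Ω'', hB'', hΩ'', heq'.symm.trans heq''⟩

theorem IsDagMatrix.isAcyclic_graphOf {p : ℕ} {B : Matrix (Fin p) (Fin p) ℝ} (hB : IsDagMatrix B) :
    IsAcyclic (graphOf B) := by
  obtain ⟨σ, hσ⟩ := hB
  exact isAcyclic_of_adj_lt σ fun u v huv => lt_of_not_ge fun h => huv (hσ v u h)

/-- Markov equivalence implies distributional equivalence: if a DAG `𝒟` has the same
skeleton and v-structures as `G(B)` (i.e., is Markov equivalent to it), then there is a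
model `(B', Ω')` with `B'` compatible with `𝒟` entailing the same covariance. -/
theorem markov_equivalent_is_distribution_equivalent
    {p : ℕ} (B Ω : Matrix (Fin p) (Fin p) ℝ)
    (hB : IsDagMatrix B) (hΩ : DiagPos Ω)
    (D : Fin p → Fin p → Prop) (hD : IsAcyclic D)
    (hskel : SameSkeleton (graphOf B) D)
    (hvstr : SameVStructs (graphOf B) D) :
    ∃ B' Ω' : Matrix (Fin p) (Fin p) ℝ,
      Compatible B' D ∧ DiagPos Ω' ∧ CovOf B Ω = CovOf B' Ω' :=
  exists_model_of_sameSkeleton_of_sameVStructs hB.isAcyclic_graphOf hD hskel hvstr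
    (fun _ _ h => h) hΩ
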